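/- Let n ≥ 2 and let 0 < M < 1. Then there exists α > 1 such that the function u(t) = t - t^α satisfies the strict differential inequality -u''(t)(1 - t²) + n t u'(t) > n u(t) for all t ∈ (0, M], and moreover u(0) = 0 and u(t) > 0 for t ∈ (0, M]. -/

import Mathlib

open Real Set

/-! With `u t = t - t ^ α` one has, for `t > 0`,
`-u''(t)(1 - t²) + n t u'(t) - n u(t) = (α - 1) t^(α-2) (α (1 - t²) - n t²)`,
so the inequality holds on `(0, M]` as soon as `α > 1` and `α (1 - M²) > n M²`;
`α = 2 + n M² / (1 - M²)` is such a choice. -/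

theorem hasDerivAt_sub_rpow {α x : ℝ} (hx : x ≠ 0) :
    HasDerivAt (fun t : ℝ => t - t ^ α) (1 - α * x ^ (α - 1)) x :=
  (hasDerivAt_id x).sub (hasDerivAt_rpow_const (Or.inl hx))

theorem deriv_deriv_sub_rpow {α x : ℝ} (hx : x ≠ 0) :
    deriv (deriv fun t : ℝ => t - t ^ α) x = -(α * ((α - 1) * x ^ (α - 2))) := by
  have hderiv : deriv (fun t : ℝ => t - t ^ α) =ᶠ[nhds x] fun y => 1 - α * y ^ (α - 1) := by
    filter_upwards [eventually_ne_nhds hx] with y hy using (hasDerivAt_sub_rpow hy).deriv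
  rw [hderiv.deriv_eq]
  have h := ((hasDerivAt_rpow_const (p := α - 1) (Or.inl hx)).const_mul α).const_sub 1
  rw [show α - 1 - 1 = α - 2 by ring] at h
  exact h.deriv

theorem residual_sub_rpow_eq {α n t : ℝ} (ht : 0 < t) :
    -(deriv (deriv fun t : ℝ => t - t ^ α) t) * (1 - t ^ 2)
        + n * t * deriv (fun t : ℝ => t - t ^ α) t - n * (t - t ^ α)
      = (α - 1) * t ^ (α - 2) * (α * (1 - t ^ 2) - n * t ^ 2) := by
  rw [(hasDerivAt_sub_rpow ht.ne').deriv, deriv_deriv_sub_rpow ht.ne']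
  have h1 : t ^ (α - 1) = t ^ (α - 2) * t := by
    rw [← rpow_add_one ht.ne']; ring_nf
  have h2 : t ^ α = t ^ (α - 2) * t ^ 2 := by
    rw [← rpow_natCast, ← rpow_add ht]; norm_num
  rw [h1, h2]
  ring

theorem mul_sq_lt_mul_one_sub_sq {n M t : ℝ} (hn : 0 ≤ n) (hM : M ^ 2 < 1) (ht : t ^ 2 ≤ M ^ 2) :
    n * t ^ 2 < (2 + n * M ^ 2 / (1 - M ^ 2)) * (1 - t ^ 2) := by
  have hM' : 0 < 1 - M ^ 2 := by linarith
  calc n * t ^ 2 ≤ n * M ^ 2 := by gcongr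
    _ < (2 + n * M ^ 2 / (1 - M ^ 2)) * (1 - M ^ 2) := by
        rw [add_mul, div_mul_cancel₀ _ hM'.ne']; linarith
    _ ≤ (2 + n * M ^ 2 / (1 - M ^ 2)) * (1 - t ^ 2) := by gcongr

theorem sub_rpow_pos {α t : ℝ} (hα : 1 < α) (ht0 : 0 < t) (ht1 : t < 1) : 0 < t - t ^ α := by
  have := rpow_lt_rpow_of_exponent_gt ht0 ht1 hα
  rw [rpow_one] at this
  linarith

/-- For n ≥ 2 and 0 < M < 1 there is α > 1 such that u(t) = t - t^α satisfies
    -u''(t)(1-t²) + n t u'(t) > n u(t) on (0,M], u(0) = 0, and u > 0 on (0,M]. -/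
theorem stmt_0 (n : ℝ) (hn : 2 ≤ n) (M : ℝ) (hM0 : 0 < M) (hM1 : M < 1) :
    ∃ α : ℝ, 1 < α ∧
      (∀ t ∈ Ioc (0:ℝ) M,
        -(deriv (deriv (fun t : ℝ => t - t ^ α)) t) * (1 - t ^ (2:ℕ))
            + n * t * deriv (fun t : ℝ => t - t ^ α) t
          > n * (t - t ^ α)) ∧
      ((0:ℝ) - (0:ℝ) ^ α = 0) ∧
      (∀ t ∈ Ioc (0:ℝ) M, 0 < t - t ^ α) := by
  have hM : M ^ 2 < 1 := by nlinarith
  set α := 2 + n * M ^ 2 / (1 - M ^ 2)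
  have hα : 1 < α := by
    have : 0 ≤ n * M ^ 2 / (1 - M ^ 2) := div_nonneg (by positivity) (by linarith)
    linarith
  refine ⟨α, hα, fun t ⟨ht0, htM⟩ => ?_, by simp [zero_rpow (by linarith : α ≠ 0)],
    fun t ⟨ht0, htM⟩ => sub_rpow_pos hα ht0 (htM.trans_lt hM1)⟩
  have hkey : n * t ^ 2 < α * (1 - t ^ 2) :=
    mul_sq_lt_mul_one_sub_sq (by linarith) hM (pow_le_pow_left₀ ht0.le htM 2)
  have hres := residual_sub_rpow_eq (α := α) (n := n) ht0
  have hpos : 0 < (α - 1) * t ^ (α - 2) * (α * (1 - t ^ 2) - n * t ^ 2) :=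
    mul_pos (mul_pos (by linarith) (rpow_pos_of_pos ht0 _)) (by linarith)
  linarith
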